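/- Let S be a skew Boolean algebra in which the equivalence relation D has only finitely many equivalence classes. Then for every x ∈ S the set A_x = {a ∈ S : a is an atom and a ≤ x} is finite, its elements are pairwise orthogonal (a∧a' = 0 for distinct a, a' ∈ A_x), and x equals the join of A_x: for any enumeration a_1,…,a_m of A_x one has x = a_1∨a_2∨⋯∨a_m (and x = 0 when A_x is empty). -/

import Mathlib

universe u

/-- A skew Boolean algebra. -/
class SBA (S : Type u) where
  wedge : S → S → S
  vee : S → S → S
  diff : S → S → S
  zero : S
  wedge_assoc : ∀ x y z : S, wedge (wedge x y) z = wedge x (wedge y z)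
  vee_assoc : ∀ x y z : S, vee (vee x y) z = vee x (vee y z)
  absorb1 : ∀ x y : S, wedge x (vee x y) = x
  absorb2 : ∀ x y : S, wedge (vee y x) x = x
  absorb3 : ∀ x y : S, vee x (wedge x y) = x
  absorb4 : ∀ x y : S, vee (wedge y x) x = x
  sdistrib1 : ∀ x y z : S, wedge x (vee y z) = vee (wedge x y) (wedge x z)
  sdistrib2 : ∀ x y z : S, wedge (vee x y) z = vee (wedge x z) (wedge y z)
  zero_wedge : ∀ x : S, wedge zero x = zero
  wedge_zero : ∀ x : S, wedge x zero = zero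
  zero_vee : ∀ x : S, vee zero x = x
  vee_zero : ∀ x : S, vee x zero = x
  diff_ax1 : ∀ x y : S, vee (wedge (wedge x y) x) (diff x y) = x
  diff_ax2 : ∀ x y : S, wedge (wedge (wedge x y) x) (diff x y) = zero
  diff_ax3 : ∀ x y : S, wedge (diff x y) (wedge (wedge x y) x) = zero

namespace SBA

scoped infixl:70 " ⋏ " => SBA.wedge
scoped infixl:65 " ⋎ " => SBA.vee
scoped infixl:70 " ∖ " => SBA.diff

variable {S : Type u} [SBA S]

/-- Green's relation `D`: `x D y` iff `x⋏y⋏x = x` and `y⋏x⋏y = y`. -/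
def Drel (x y : S) : Prop := x ⋏ y ⋏ x = x ∧ y ⋏ x ⋏ y = y

/-- The natural partial order: `x ≤ y` iff `x⋏y = x = y⋏x`. -/
def nle (x y : S) : Prop := x ⋏ y = x ∧ y ⋏ x = x

/-- An atom: a nonzero element with nothing strictly between it and `0`. -/
def IsAtom (a : S) : Prop := a ≠ zero ∧ ∀ x : S, nle x a → x = zero ∨ x = a

/-- `X` generates `S`: the only subset of `S` containing `X` and `0` and closed
under the three operations is `S` itself. -/
def Generates (X : Set S) : Prop :=
  ∀ T : Set S, X ⊆ T → zero ∈ T →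
    (∀ a b : S, a ∈ T → b ∈ T → a ⋏ b ∈ T ∧ a ⋎ b ∈ T ∧ a ∖ b ∈ T) →
    T = Set.univ

/-- A homomorphism of skew Boolean algebras. -/
def IsHom {T : Type u} [SBA T] (f : S → T) : Prop :=
  (∀ a b : S, f (a ⋏ b) = f a ⋏ f b) ∧ (∀ a b : S, f (a ⋎ b) = f a ⋎ f b) ∧
    (∀ a b : S, f (a ∖ b) = f a ∖ f b) ∧ f zero = zero

end SBA

open SBA

/-- A left-handed skew Boolean algebra. -/
class LeftHanded (S : Type u) [SBA S] : Prop where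
  lh_wedge : ∀ x y : S, x ⋏ y ⋏ x = x ⋏ y
  lh_vee : ∀ x y : S, x ⋎ y ⋎ x = y ⋎ x

/-- `S` is freely generated by `X` over the variety of all skew Boolean algebras. -/
def FreelyGenerates (S : Type u) [SBA S] (X : Set S) : Prop :=
  Generates X ∧
    ∀ (T : Type u) [SBA T], ∀ g : X → T,
      ∃ f : S → T, IsHom f ∧ ∀ x : X, f x = g x

/-- `S` is freely generated by `X` over the variety of left-handed skew Boolean algebras. -/
def LFreelyGenerates (S : Type u) [SBA S] [LeftHanded S] (X : Set S) : Prop :=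
  Generates X ∧
    ∀ (T : Type u) [SBA T] [LeftHanded T], ∀ g : X → T,
      ∃ f : S → T, IsHom f ∧ ∀ x : X, f x = g x

/-- Left-associated join of a list, with the empty join being `0`. -/
def listJoin {S : Type u} [SBA S] : List S → S
  | [] => SBA.zero
  | h :: t => t.foldl SBA.vee h

/-!
Below a fixed `x` an SBA behaves like a Boolean algebra: if `u ≤ x` then `x = u ⋎ (x ∖ u)` with
orthogonal summands, which forces any two elements below `x` to commute. Hence two `D`-related
elements below `x` coincide, so the principal ideal of `x` injects into `S / D` and is finite,
and every nonzero element below `x` lies above an atom. Two distinct atoms below `x` meet in an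
element below both, hence in `0`. If `j` is the join of all atoms below `x`, then `x ∖ j` is below
`x` and above no atom, so it is `0` and `x = j ⋎ (x ∖ j) = j`.
-/

namespace SBA

variable {S : Type u} [SBA S] {a b c u v x y z : S}

lemma wedge_self (a : S) : a ⋏ a = a := by
  simpa only [absorb3] using absorb1 a (a ⋏ a)

lemma wedge_eq_zero_comm (h : a ⋏ b = zero) : b ⋏ a = zero := by
  rw [← wedge_self (b ⋏ a), wedge_assoc, ← wedge_assoc a, h, zero_wedge, wedge_zero]

/-- The `J`-order of the band `(S, ⋏)` is transitive. -/
lemma wedge_wedge_eq_of_wedge_wedge_eq (hxy : x ⋏ y ⋏ x = x) (hyz : y ⋏ z ⋏ y = y) :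
    x ⋏ z ⋏ x = x := by
  have hxyzyx : x ⋏ y ⋏ z ⋏ (y ⋏ x) = x :=
    calc x ⋏ y ⋏ z ⋏ (y ⋏ x) = x ⋏ (y ⋏ z ⋏ y) ⋏ x := by simp only [wedge_assoc]
      _ = x := by rw [hyz, hxy]
  -- `x = p ⋏ (z ⋏ x)` with `p = x ⋏ y`, and `z ⋏ x` is idempotent
  have hxyzx : x ⋏ y ⋏ (z ⋏ x) = x := by
    calc x ⋏ y ⋏ (z ⋏ x) = (x ⋏ y ⋏ z) ⋏ (x ⋏ y ⋏ z) ⋏ (y ⋏ x) := by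
          nth_rewrite 2 [← hxyzyx]
          simp only [wedge_assoc]
      _ = x := by rw [wedge_self, hxyzyx]
  calc x ⋏ z ⋏ x = x ⋏ y ⋏ ((z ⋏ x) ⋏ (z ⋏ x)) := by
        nth_rewrite 1 [← hxyzx]
        simp only [wedge_assoc]
    _ = x := by rw [wedge_self, hxyzx]

lemma drel_equivalence : Equivalence (Drel (S := S)) where
  refl a := by simp only [Drel, wedge_self, and_self]
  symm h := ⟨h.2, h.1⟩
  trans hab hbc :=
    ⟨wedge_wedge_eq_of_wedge_wedge_eq hab.1 hbc.1, wedge_wedge_eq_of_wedge_wedge_eq hbc.2 hab.2⟩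

lemma nle_refl (a : S) : nle a a := ⟨wedge_self a, wedge_self a⟩

lemma nle_trans (hab : nle a b) (hbc : nle b c) : nle a c := by
  constructor
  · rw [← hab.1, wedge_assoc, hbc.1]
  · rw [← hab.2, ← wedge_assoc, hbc.2]

lemma nle_antisymm (hab : nle a b) (hba : nle b a) : a = b :=
  hab.1.symm.trans hba.2

lemma zero_nle (a : S) : nle zero a := ⟨zero_wedge a, wedge_zero a⟩

section Below

variable (h : nle u x)
include h

lemma wedge_wedge_of_nle : x ⋏ u ⋏ x = u := by
  rw [h.2, h.1]

lemma vee_diff_of_nle : u ⋎ (x ∖ u) = x := by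
  simpa only [wedge_wedge_of_nle h] using diff_ax1 x u

lemma wedge_diff_of_nle : u ⋏ (x ∖ u) = zero := by
  simpa only [wedge_wedge_of_nle h] using diff_ax2 x u

lemma diff_wedge_of_nle : (x ∖ u) ⋏ u = zero := by
  simpa only [wedge_wedge_of_nle h] using diff_ax3 x u

lemma diff_nle_of_nle : nle (x ∖ u) x := by
  constructor
  · nth_rewrite 2 [← vee_diff_of_nle h]
    rw [sdistrib1, diff_wedge_of_nle h, zero_vee, wedge_self]
  · nth_rewrite 1 [← vee_diff_of_nle h]
    exact absorb2 _ _

end Below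

lemma wedge_comm_of_nle (hu : nle u x) (hv : nle v x) : u ⋏ v = v ⋏ u := by
  set d := x ∖ u
  have hu_vd : u ⋏ (v ⋏ d) = zero :=
    wedge_eq_zero_comm (by rw [wedge_assoc, diff_wedge_of_nle hu, wedge_zero])
  have hd_vu : d ⋏ (v ⋏ u) = zero :=
    wedge_eq_zero_comm (by rw [wedge_assoc, wedge_diff_of_nle hu, wedge_zero])
  calc u ⋏ v = u ⋏ (v ⋏ (u ⋎ d)) := by rw [vee_diff_of_nle hu, hv.1]
    _ = u ⋏ (v ⋏ u) := by rw [sdistrib1, sdistrib1, hu_vd, vee_zero]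
    _ = (u ⋎ d) ⋏ v ⋏ u := by
      rw [sdistrib2, sdistrib2, wedge_assoc d, hd_vu, vee_zero, wedge_assoc]
    _ = v ⋏ u := by rw [vee_diff_of_nle hu, hv.2]

lemma wedge_nle_left_of_nle (hu : nle u x) (hv : nle v x) : nle (u ⋏ v) u := by
  constructor
  · rw [wedge_assoc, wedge_comm_of_nle hv hu, ← wedge_assoc, wedge_self]
  · rw [← wedge_assoc, wedge_self]

lemma vee_nle_of_nle (hu : nle u x) (hv : nle v x) : nle (u ⋎ v) x :=
  ⟨by rw [sdistrib2, hu.1, hv.1], by rw [sdistrib1, hu.2, hv.2]⟩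

lemma nle_vee_left_of_nle (hu : nle u x) (hv : nle v x) : nle u (u ⋎ v) :=
  ⟨absorb1 u v, by rw [wedge_comm_of_nle (vee_nle_of_nle hu hv) hu, absorb1]⟩

lemma nle_vee_right_of_nle (hu : nle u x) (hv : nle v x) : nle v (u ⋎ v) :=
  ⟨by rw [wedge_comm_of_nle hv (vee_nle_of_nle hu hv), absorb2], absorb2 v u⟩

lemma eq_of_drel_of_nle (hy : nle y x) (hz : nle z x) (h : Drel y z) : y = z := by
  have hcomm := wedge_comm_of_nle hy hz
  calc y = y ⋏ z ⋏ y := h.1.symm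
    _ = y ⋏ z := by rw [wedge_assoc, ← hcomm, ← wedge_assoc, wedge_self]
    _ = z ⋏ y ⋏ z := by rw [wedge_assoc, hcomm, ← wedge_assoc, wedge_self]
    _ = z := h.2

lemma finite_setOf_nle (hfin : Finite (Quot (Drel (S := S)))) (x : S) :
    {y : S | nle y x}.Finite := by
  rw [← Set.finite_coe_iff]
  refine Finite.of_injective (fun y : {y : S | nle y x} => Quot.mk Drel y.1) ?_
  rintro ⟨y, hy⟩ ⟨z, hz⟩ hyz
  exact Subtype.ext <| eq_of_drel_of_nle hy hz <|
    drel_equivalence.eqvGen_iff.mp (Quot.eqvGen_exact hyz)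

lemma exists_isAtom_nle (hfin : {y : S | nle y x}.Finite) (hy : nle y x) (hy0 : y ≠ zero) :
    ∃ a : S, IsAtom a ∧ nle a y := by
  set P : Set S := {z : S | nle z y ∧ z ≠ zero}
  -- a `⊆`-minimal principal ideal among those of nonzero elements below `y`
  obtain ⟨a, ⟨hay, ha0⟩, hmin⟩ := Set.Finite.exists_minimalFor (fun z : S => {w : S | nle w z}) P
    (hfin.subset fun z hz => nle_trans hz.1 hy) ⟨y, nle_refl y, hy0⟩
  refine ⟨a, ⟨ha0, fun w hwa => or_iff_not_imp_left.mpr fun hw0 => ?_⟩, hay⟩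
  have hsub : {v : S | nle v w} ⊆ {v : S | nle v a} := fun v hv => nle_trans hv hwa
  exact nle_antisymm hwa (hmin ⟨nle_trans hwa hay, hw0⟩ hsub (nle_refl a))

lemma IsAtom.wedge_eq_zero (ha : IsAtom a) (hb : IsAtom b) (hax : nle a x) (hbx : nle b x)
    (hab : a ≠ b) : a ⋏ b = zero := by
  refine (ha.2 _ (wedge_nle_left_of_nle hax hbx)).resolve_right fun hab_eq => ?_
  have hab_nle : nle a b := ⟨hab_eq, by rw [wedge_comm_of_nle hbx hax, hab_eq]⟩
  exact (hb.2 a hab_nle).elim ha.1 hab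

lemma foldl_vee_nle_of_nle (l : List S) (hy : nle y x) (hl : ∀ a ∈ l, nle a x) :
    nle (l.foldl vee y) x ∧ ∀ a ∈ y :: l, nle a (l.foldl vee y) := by
  induction l generalizing y with
  | nil => exact ⟨hy, by simpa using nle_refl y⟩
  | cons h t ih =>
    have hh : nle h x := hl h List.mem_cons_self
    obtain ⟨hx, hmem⟩ := ih (vee_nle_of_nle hy hh) fun a ha => hl a (List.mem_cons_of_mem h ha)
    refine ⟨hx, fun a ha => ?_⟩
    rcases List.mem_cons.mp ha with rfl | ha
    · exact nle_trans (nle_vee_left_of_nle hy hh) (hmem _ List.mem_cons_self)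
    rcases List.mem_cons.mp ha with rfl | ha
    · exact nle_trans (nle_vee_right_of_nle hy hh) (hmem _ List.mem_cons_self)
    · exact hmem a (List.mem_cons_of_mem _ ha)

lemma listJoin_nle_of_nle {l : List S} (hl : ∀ a ∈ l, nle a x) :
    nle (listJoin l) x ∧ ∀ a ∈ l, nle a (listJoin l) := by
  cases l with
  | nil => exact ⟨zero_nle x, by simp⟩
  | cons h t =>
    exact foldl_vee_nle_of_nle t (hl h List.mem_cons_self)
      fun a ha => hl a (List.mem_cons_of_mem h ha)

lemma eq_of_forall_isAtom_nle (hfin : {y : S | nle y x}.Finite) (hjx : nle y x)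
    (hatoms : ∀ a, IsAtom a → nle a x → nle a y) : x = y := by
  have hd : x ∖ y = zero := by
    by_contra hd0
    obtain ⟨a, ha, had⟩ := exists_isAtom_nle hfin (diff_nle_of_nle hjx) hd0
    have hay := hatoms a ha (nle_trans had (diff_nle_of_nle hjx))
    apply ha.1
    rw [← had.1, ← hay.1, wedge_assoc, wedge_diff_of_nle hjx, wedge_zero]
  rw [← vee_diff_of_nle hjx, hd, vee_zero]

end SBA

theorem stmt3 (S : Type u) [SBA S]
    (hfin : Finite (Quot (Drel (S := S)))) (x : S) :
    {a : S | SBA.IsAtom a ∧ nle a x}.Finite ∧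
    (∀ a ∈ {a : S | SBA.IsAtom a ∧ nle a x},
      ∀ b ∈ {a : S | SBA.IsAtom a ∧ nle a x}, a ≠ b → a ⋏ b = SBA.zero) ∧
    (∀ l : List S, l.Nodup → (∀ a : S, a ∈ l ↔ SBA.IsAtom a ∧ nle a x) →
      x = listJoin l) := by
  have hbelow : {y : S | nle y x}.Finite := finite_setOf_nle hfin x
  refine ⟨hbelow.subset fun a ha => ha.2, fun a ha b hb hab => ha.1.wedge_eq_zero hb.1 ha.2 hb.2 hab,
    fun l _ hl => ?_⟩
  obtain ⟨hjx, hmem⟩ := listJoin_nle_of_nle fun a ha => ((hl a).mp ha).2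
  exact eq_of_forall_isAtom_nle hbelow hjx fun a ha hax => hmem a ((hl a).mpr ⟨ha, hax⟩)
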